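/- Given a decision tree T with the standard path properties and a partial assignment A, A is a weak abductive explanation for class c in T if and only if A is inconsistent with (the literals of) every root-to-leaf path of T whose terminal class is different from c. -/

import Mathlib

/-- Binary decision trees over `n` binary features with classes in `K`. -/
inductive DT (n : ℕ) (K : Type) where
  | leaf (c : K)
  | node (i : Fin n) (l r : DT n K)

def DT.eval {n : ℕ} {K : Type} : DT n K → (Fin n → Bool) → K
  | .leaf c, _ => c
  | .node i l r, x => if x i then r.eval x else l.eval x

/-- The root-to-leaf paths of a decision tree, each given by its list of
literals (feature, value) together with the class of its terminal node. -/
def DT.paths {n : ℕ} {K : Type} : DT n K → List (List (Fin n × Bool) × K)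
  | .leaf c => [([], c)]
  | .node i l r =>
      (l.paths.map fun p => ((i, false) :: p.1, p.2)) ++
      (r.paths.map fun p => ((i, true) :: p.1, p.2))

/-- A point of feature space satisfies all literals of a path. -/
def LitsConsistentWith {n : ℕ} (L : List (Fin n × Bool)) (x : Fin n → Bool) : Prop :=
  ∀ l ∈ L, x l.1 = l.2

/-- A partial assignment: at most one boolean value per feature. -/
def PAConsistentWith {n : ℕ} (A : Fin n → Option Bool) (x : Fin n → Bool) : Prop :=
  ∀ i b, A i = some b → x i = b


lemma DT.exists_path {n : ℕ} {K : Type} (T : DT n K) (x : Fin n → Bool) :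
    ∃ p ∈ T.paths, LitsConsistentWith p.1 x ∧ p.2 = T.eval x := by
  induction T with
  | leaf c => exact ⟨([], c), by simp [DT.paths], by simp [LitsConsistentWith], rfl⟩
  | node i l r ihl ihr =>
    by_cases h : x i
    · obtain ⟨p, hp, hc, he⟩ := ihr
      refine ⟨((i, true) :: p.1, p.2), ?_, ?_, ?_⟩
      · exact List.mem_append_right _ (List.mem_map.mpr ⟨p, hp, rfl⟩)
      · intro l hl
        rcases List.mem_cons.mp hl with hl | hl
        · subst hl; simpa using h
        · exact hc _ hl
      · simp [DT.eval, h, he]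
    · obtain ⟨p, hp, hc, he⟩ := ihl
      refine ⟨((i, false) :: p.1, p.2), ?_, ?_, ?_⟩
      · exact List.mem_append_left _ (List.mem_map.mpr ⟨p, hp, rfl⟩)
      · intro l hl
        rcases List.mem_cons.mp hl with hl | hl
        · subst hl; simpa using h
        · exact hc _ hl
      · simp [DT.eval, h, he]

lemma DT.path_class {n : ℕ} {K : Type} (T : DT n K) :
    ∀ p ∈ T.paths, ∀ x, LitsConsistentWith p.1 x → p.2 = T.eval x := by
  induction T with
  | leaf c => intro p hp x _; simp [DT.paths] at hp; simp [hp, DT.eval]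
  | node i l r ihl ihr =>
    intro p hp x hc
    rcases List.mem_append.mp hp with hm | hm
    · obtain ⟨q, hq, rfl⟩ := List.mem_map.mp hm
      have hi : x i = false := by
        simpa using hc (i, false) List.mem_cons_self
      have := ihl q hq x (fun l hl => hc l (List.mem_cons_of_mem _ hl))
      simpa [DT.eval, hi] using this
    · obtain ⟨q, hq, rfl⟩ := List.mem_map.mp hm
      have hi : x i = true := by
        simpa using hc (i, true) List.mem_cons_self
      have := ihr q hq x (fun l hl => hc l (List.mem_cons_of_mem _ hl))
      simpa [DT.eval, hi] using this

/-- A partial assignment `A` is a WAXp for class `c` in a decision tree `T` iff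
`A` is inconsistent with the literals of every root-to-leaf path of `T` whose
terminal class differs from `c`. -/
theorem stmt17 {n : ℕ} {K : Type} (T : DT n K) (A : Fin n → Option Bool) (c : K) :
    (∀ x, PAConsistentWith A x → T.eval x = c) ↔
      ∀ p ∈ T.paths, p.2 ≠ c →
        ¬ ∃ x, PAConsistentWith A x ∧ LitsConsistentWith p.1 x := by
  constructor
  · rintro h p hp hne ⟨x, hA, hL⟩
    exact hne ((DT.path_class T p hp x hL).trans (h x hA))
  · intro h x hA
    obtain ⟨p, hp, hL, he⟩ := DT.exists_path T x
    by_contra hne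
    exact h p hp (he ▸ hne) ⟨x, hA, hL⟩
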